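/- Let N ≥ 1 and let X and W be real tensors of size I₁×⋯×I_N where every entry of W is 0 or 1. Fix m ∈ {1,…,N} and matrices A^(n) ∈ ℝ^{I_n×R} for n ≠ m. Define f_{W₁}(A^(m)) = ½‖W ∗ (X − [[A^(1),…,A^(N)]])‖², where ∗ is the Hadamard (elementwise) product. Then f_{W₁} is Fréchet differentiable at every A^(m) and, for every i ∈ {1,…,I_m} and r ∈ {1,…,R}, its partial derivative with respect to a^{(m)}_{ir} equals the sum over all index tuples (i₁,…,i_N) with i_m = i of w_{i₁⋯i_N}(z_{i₁⋯i_N} − x_{i₁⋯i_N}) Π_{n≠m} a^{(n)}_{i_n r}, where z denotes the entries of [[A^(1),…,A^(N)]]. (In matricized form this is ∂f_{W₁}/∂A^(m) = (W₍ₘ₎ ∗ Z₍ₘ₎ − W₍ₘ₎ ∗ X₍ₘ₎)A^(−m).) -/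

import Mathlib

open Finset

/-- The matrix with a `1` in entry `(i,r)` and `0` elsewhere (direction for a
partial derivative with respect to entry `(i,r)`). -/
def entryDir {P R : ℕ} (i : Fin P) (r : Fin R) : Fin P → Fin R → ℝ :=
  fun i' r' => if i' = i ∧ r' = r then 1 else 0

/-!
With the factors `A⁽ⁿ⁾`, `n ≠ m`, fixed, every entry of `[[A⁽¹⁾,…,A⁽ᴺ⁾]]` is a linear functional
of `A⁽ᵐ⁾`: the entry at `idx` is the row `idx m` of `A⁽ᵐ⁾` paired with the vector
`r ↦ ∏_{n≠m} a⁽ⁿ⁾_{idx n, r}`. Hence `f_{W₁}` is a weighted linear least-squares objective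
`½ ∑ₖ (wₖ (xₖ - Lₖ v))²`, whose derivative is `∑ₖ wₖ² (Lₖ v - xₖ) Lₖ`. Binary weights satisfy
`wₖ² = wₖ`, and evaluating at the basis matrix `entryDir i r` keeps exactly the tuples with
`idx m = i`.
-/

section WeightedLeastSquares

variable {ι E : Type*} [Fintype ι] [NormedAddCommGroup E] [NormedSpace ℝ E]

theorem hasFDerivAt_half_sum_sq_weighted_residual (L : ι → E →L[ℝ] ℝ) (w x : ι → ℝ) (v : E) :
    HasFDerivAt (fun u => (1 / 2 : ℝ) * ∑ k, (w k * (x k - L k u)) ^ 2)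
      (∑ k, (w k ^ 2 * (L k v - x k)) • L k) v := by
  have hterm k := ((((L k).hasFDerivAt (x := v)).const_sub (x k)).const_mul (w k)).pow 2
  refine ((HasFDerivAt.fun_sum fun k _ => hterm k).const_mul (1 / 2)).congr_fderiv ?_
  ext u
  simp only [smul_apply, _root_.sum_apply, neg_apply, smul_eq_mul, mul_sum]
  refine sum_congr rfl fun k _ => ?_
  ring

end WeightedLeastSquares

section RowFunctional

variable {P Q : Type*} [Fintype Q]

def rowFunctional (j : P) (c : Q → ℝ) : (P → Q → ℝ) →L[ℝ] ℝ :=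
  ∑ q, c q • (ContinuousLinearMap.proj q).comp
    (ContinuousLinearMap.proj (R := ℝ) (φ := fun _ : P => Q → ℝ) j)

@[simp]
theorem rowFunctional_apply (j : P) (c : Q → ℝ) (M : P → Q → ℝ) :
    rowFunctional j c M = ∑ q, M j q * c q := by
  simp [rowFunctional, mul_comm]

end RowFunctional

theorem rowFunctional_entryDir {P R : ℕ} (j i : Fin P) (c : Fin R → ℝ) (r : Fin R) :
    rowFunctional j c (entryDir i r) = if j = i then c r else 0 := by
  by_cases h : j = i <;> simp [entryDir, h]

theorem nway_weighted_cp_grad_general (N R : ℕ) (I : Fin N → ℕ)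
    (X W : ((n : Fin N) → Fin (I n)) → ℝ)
    (hW : ∀ idx, W idx = 0 ∨ W idx = 1) (m : Fin N)
    (A : (n : Fin N) → Fin (I n) → Fin R → ℝ)
    (Am : Fin (I m) → Fin R → ℝ) :
    DifferentiableAt ℝ
      (fun Am' : Fin (I m) → Fin R → ℝ =>
        (1 / 2 : ℝ) * ∑ idx : (n : Fin N) → Fin (I n),
          (W idx *
            (X idx - ∑ r, Am' (idx m) r * ∏ n ∈ univ.erase m, A n (idx n) r)) ^ 2)
      Am ∧
    ∀ (i : Fin (I m)) (r : Fin R),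
      fderiv ℝ
        (fun Am' : Fin (I m) → Fin R → ℝ =>
          (1 / 2 : ℝ) * ∑ idx : (n : Fin N) → Fin (I n),
            (W idx *
              (X idx - ∑ r, Am' (idx m) r * ∏ n ∈ univ.erase m, A n (idx n) r)) ^ 2)
        Am (entryDir i r)
      = ∑ idx ∈ univ.filter (fun idx : (n : Fin N) → Fin (I n) => idx m = i),
          W idx *
            ((∑ r', Am (idx m) r' * ∏ n ∈ univ.erase m, A n (idx n) r') - X idx)
            * ∏ n ∈ univ.erase m, A n (idx n) r := by
  let L (idx : (n : Fin N) → Fin (I n)) :=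
    rowFunctional (idx m) fun r => ∏ n ∈ univ.erase m, A n (idx n) r
  have hderiv := hasFDerivAt_half_sum_sq_weighted_residual L W X Am
  simp only [L, rowFunctional_apply] at hderiv
  refine ⟨hderiv.differentiableAt, fun i r => ?_⟩
  have hW_sq : ∀ idx, W idx ^ 2 = W idx := fun idx => by
    rcases hW idx with h | h <;> simp [h]
  simp only [hderiv.fderiv, _root_.sum_apply, smul_apply, rowFunctional_entryDir, smul_eq_mul,
    hW_sq, sum_filter]
  refine sum_congr rfl fun idx _ => ?_
  split_ifs <;> simp [mul_assoc]

/-- For `N`-way tensors `X` and binary `W` (`N ≥ 1`) and fixed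
factor matrices `A⁽ⁿ⁾` for `n ≠ m`, the weighted objective
`f_{W₁}(A⁽ᵐ⁾) = ½‖W ∗ (X − [[A⁽¹⁾,…,A⁽ᴺ⁾]])‖²` is Fréchet differentiable at
every `A⁽ᵐ⁾`, and its partial derivative with respect to `a⁽ᵐ⁾_{ir}` equals
the sum over all index tuples `idx` with `idx m = i` of
`w_idx (z_idx − x_idx) ∏_{n≠m} a⁽ⁿ⁾_{idx n, r}`
(the matricized formula `(W₍ₘ₎ ∗ Z₍ₘ₎ − W₍ₘ₎ ∗ X₍ₘ₎) A⁽⁻ᵐ⁾`). -/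
theorem nway_weighted_cp_grad (N R : ℕ) (hN : 1 ≤ N) (I : Fin N → ℕ)
    (X W : ((n : Fin N) → Fin (I n)) → ℝ)
    (hW : ∀ idx, W idx = 0 ∨ W idx = 1) (m : Fin N)
    (A : (n : Fin N) → Fin (I n) → Fin R → ℝ)
    (Am : Fin (I m) → Fin R → ℝ) :
    DifferentiableAt ℝ
      (fun Am' : Fin (I m) → Fin R → ℝ =>
        (1 / 2 : ℝ) * ∑ idx : (n : Fin N) → Fin (I n),
          (W idx *
            (X idx - ∑ r, Am' (idx m) r * ∏ n ∈ univ.erase m, A n (idx n) r)) ^ 2)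
      Am ∧
    ∀ (i : Fin (I m)) (r : Fin R),
      fderiv ℝ
        (fun Am' : Fin (I m) → Fin R → ℝ =>
          (1 / 2 : ℝ) * ∑ idx : (n : Fin N) → Fin (I n),
            (W idx *
              (X idx - ∑ r, Am' (idx m) r * ∏ n ∈ univ.erase m, A n (idx n) r)) ^ 2)
        Am (entryDir i r)
      = ∑ idx ∈ univ.filter (fun idx : (n : Fin N) → Fin (I n) => idx m = i),
          W idx *
            ((∑ r', Am (idx m) r' * ∏ n ∈ univ.erase m, A n (idx n) r') - X idx)
            * ∏ n ∈ univ.erase m, A n (idx n) r :=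
  nway_weighted_cp_grad_general N R I X W hW m A Am
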